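/- arXiv:1008.4685 — 14 statements merged into one kernel-verified Lean document; each statement's English description precedes it below -/
import Mathlib

section
/- Let C be a type, comp : C → C → Multiset C a composition rule satisfying condition (C2) and condition (C3) with neutral element e, and let K be a commutative ring. Then the induced multiplication mul on the free module C →₀ K is associative and Finsupp.single e (1 : K) is a two-sided unit: for all f g h : C →₀ K, mul f (mul g h) = mul (mul f g) h, mul (Finsupp.single e 1) f = f, and mul f (Finsupp.single e 1) = f. (Proposition 1, Algebra.) -/
/-!
Both sides of associativity are trilinear and the unit laws are linear, so it suffices to check
them on basis vectors `single Γ 1`. There `single a 1 * (single b 1 * single c 1)` and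
`(single a 1 * single b 1) * single c 1` are the sums of `single Γ 1` over the two multisets
equated by (C2), and (C3) makes multiplication by `single e 1` fix every basis vector.
-/

/-- The induced multiplication on the free module `C →₀ K`: the `K`-bilinear map
determined on basis vectors by
`mul (single Γ₂ 1) (single Γ₁ 1) = ((comp Γ₂ Γ₁).map (fun Γ => single Γ 1)).sum`. -/
noncomputable def mulF {C : Type*} (K : Type*) [CommRing K]
    (comp : C → C → Multiset C) : (C →₀ K) →ₗ[K] (C →₀ K) →ₗ[K] (C →₀ K) :=
  Finsupp.lift ((C →₀ K) →ₗ[K] (C →₀ K)) K C fun Γ₂ =>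
    Finsupp.lift (C →₀ K) K C fun Γ₁ =>
      ((comp Γ₂ Γ₁).map fun Γ => Finsupp.single Γ (1 : K)).sum

namespace LinearMap

variable {R ι : Type*} [CommSemiring R]

theorem assoc_of_assoc_single (μ : (ι →₀ R) →ₗ[R] (ι →₀ R) →ₗ[R] (ι →₀ R))
    (h : ∀ a b c : ι, μ (Finsupp.single a 1) (μ (Finsupp.single b 1) (Finsupp.single c 1)) =
      μ (μ (Finsupp.single a 1) (Finsupp.single b 1)) (Finsupp.single c 1))
    (f g k : ι →₀ R) : μ f (μ g k) = μ (μ f g) k := by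
  -- the trilinear maps `f g k ↦ μ f (μ g k)` and `f g k ↦ μ (μ f g) k`
  have : (llcomp R _ _ _ ∘ₗ μ).compl₂ μ = μ.compr₂ μ := by
    ext a b c : 6
    exact h a b c
  exact congr($this f g k)

end LinearMap

namespace mulF

variable {C : Type*} (K : Type*) [CommRing K] (comp : C → C → Multiset C)

theorem single_one_single_one (a b : C) :
    mulF K comp (Finsupp.single a 1) (Finsupp.single b 1) =
      ((comp a b).map fun Γ => Finsupp.single Γ (1 : K)).sum := by
  simp [mulF]

theorem single_one_sum (a : C) (s : Multiset C) :
    mulF K comp (Finsupp.single a 1) (s.map fun Γ => Finsupp.single Γ (1 : K)).sum =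
      ((s.bind (comp a)).map fun Γ => Finsupp.single Γ (1 : K)).sum := by
  simp [map_multiset_sum, Multiset.map_bind, Multiset.sum_bind, single_one_single_one]

theorem sum_single_one (s : Multiset C) (c : C) :
    mulF K comp (s.map fun Γ => Finsupp.single Γ (1 : K)).sum (Finsupp.single c 1) =
      ((s.bind (comp · c)).map fun Γ => Finsupp.single Γ (1 : K)).sum := by
  rw [← LinearMap.flip_apply (mulF K comp), map_multiset_sum]
  simp [Function.comp_def, Multiset.map_bind, Multiset.sum_bind, single_one_single_one]

end mulF

/-- Proposition 1 (Algebra): under conditions (C2) and (C3) the induced multiplication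
is associative with two-sided unit `single e 1`. -/
theorem stmt0 {C : Type*} (K : Type*) [CommRing K]
    (comp : C → C → Multiset C)
    (hC2 : ∀ Γ₃ Γ₂ Γ₁ : C,
      (comp Γ₂ Γ₁).bind (fun x => comp Γ₃ x) = (comp Γ₃ Γ₂).bind (fun x => comp x Γ₁))
    (e : C)
    (hC3l : ∀ Γ : C, comp e Γ = {Γ})
    (hC3r : ∀ Γ : C, comp Γ e = {Γ}) :
    (∀ f g h : C →₀ K, mulF K comp f (mulF K comp g h) = mulF K comp (mulF K comp f g) h) ∧
    (∀ f : C →₀ K, mulF K comp (Finsupp.single e 1) f = f) ∧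
    (∀ f : C →₀ K, mulF K comp f (Finsupp.single e 1) = f) := by
  have left_unit : mulF K comp (Finsupp.single e 1) = LinearMap.id := by
    ext a
    simp [mulF.single_one_single_one, hC3l]
  have right_unit : (mulF K comp).flip (Finsupp.single e 1) = LinearMap.id := by
    ext a
    simp [mulF.single_one_single_one, hC3r]
  refine ⟨LinearMap.assoc_of_assoc_single _ fun a b c => ?_,
    fun f => congr($left_unit f), fun f => congr($right_unit f)⟩
  rw [mulF.single_one_single_one, mulF.single_one_single_one, mulF.single_one_sum,
    mulF.sum_single_one, hC2]
end

section
/- Let C be a type, d : C → Multiset (C × C) a decomposition rule satisfying condition (D2), and K a commutative ring. Then the induced comultiplication Δ on C →₀ K is coassociative: composing Δ with Δ applied to the left tensor factor agrees, after the canonical associator isomorphism ((M ⊗ M) ⊗ M ≃ M ⊗ (M ⊗ M)) of tensor products, with composing Δ with Δ applied to the right tensor factor. (Proposition 2, coassociativity part.) -/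
open TensorProduct

/-- The induced comultiplication on the free module `C →₀ K`: the `K`-linear map
determined on basis vectors by
`Δ (single Γ 1) = ((d Γ).map (fun p => single p.1 1 ⊗ₜ single p.2 1)).sum`. -/
noncomputable def deltaF {C : Type*} (K : Type*) [CommRing K]
    (d : C → Multiset (C × C)) : (C →₀ K) →ₗ[K] (C →₀ K) ⊗[K] (C →₀ K) :=
  Finsupp.lift ((C →₀ K) ⊗[K] (C →₀ K)) K C fun Γ =>
    ((d Γ).map fun p =>
      Finsupp.single p.1 (1 : K) ⊗ₜ[K] Finsupp.single p.2 (1 : K)).sum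

lemma deltaF_single {C : Type*} (K : Type*) [CommRing K]
    (d : C → Multiset (C × C)) (Γ : C) :
    deltaF K d (Finsupp.single Γ (1 : K)) =
    ((d Γ).map fun p =>
      Finsupp.single p.1 (1 : K) ⊗ₜ[K] Finsupp.single p.2 (1 : K)).sum := by
  simp [deltaF]

lemma multiset_sum_tmul {K M N : Type*} [CommSemiring K] [AddCommMonoid M] [AddCommMonoid N]
    [Module K M] [Module K N] (m : Multiset M) (x : N) :
    m.sum ⊗ₜ[K] x = (m.map (· ⊗ₜ[K] x)).sum :=
  map_multiset_sum ((TensorProduct.mk K M N).flip x) m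

lemma tmul_multiset_sum {K M N : Type*} [CommSemiring K] [AddCommMonoid M] [AddCommMonoid N]
    [Module K M] [Module K N] (x : M) (m : Multiset N) :
    x ⊗ₜ[K] m.sum = (m.map (x ⊗ₜ[K] ·)).sum :=
  map_multiset_sum (TensorProduct.mk K M N x) m

/-- Proposition 2 (coassociativity part): under condition (D2) the induced
comultiplication is coassociative. -/
theorem stmt2 {C : Type*} (K : Type*) [CommRing K]
    (d : C → Multiset (C × C))
    (hD2 : ∀ Γ : C,
      (d Γ).bind (fun p => (d p.2).map (fun q => (p.1, q.1, q.2))) =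
      (d Γ).bind (fun p => (d p.1).map (fun q => (q.1, q.2, p.2)))) :
    (TensorProduct.assoc K (C →₀ K) (C →₀ K) (C →₀ K)).toLinearMap ∘ₗ
        LinearMap.rTensor (C →₀ K) (deltaF K d) ∘ₗ deltaF K d =
      LinearMap.lTensor (C →₀ K) (deltaF K d) ∘ₗ deltaF K d := by
  apply Finsupp.lhom_ext'
  intro Γ
  apply LinearMap.ext_ring
  set f : C × C × C → (C →₀ K) ⊗[K] ((C →₀ K) ⊗[K] (C →₀ K)) := fun t =>
    Finsupp.single t.1 (1 : K) ⊗ₜ[K]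
      (Finsupp.single t.2.1 (1 : K) ⊗ₜ[K] Finsupp.single t.2.2 (1 : K)) with hf
  have lhs_eq :
      (TensorProduct.assoc K (C →₀ K) (C →₀ K) (C →₀ K)).toLinearMap
        (LinearMap.rTensor (C →₀ K) (deltaF K d) (deltaF K d (Finsupp.single Γ (1 : K)))) =
      (((d Γ).bind fun p => (d p.1).map fun q => (q.1, q.2, p.2)).map f).sum := by
    rw [deltaF_single, map_multiset_sum, map_multiset_sum, Multiset.map_map,
      Multiset.map_map, Multiset.map_bind, Multiset.sum_bind]
    congr 1
    apply Multiset.map_congr rfl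
    intro p _
    simp only [Function.comp_apply, LinearMap.rTensor_tmul, deltaF_single]
    rw [multiset_sum_tmul, map_multiset_sum, Multiset.map_map, Multiset.map_map]
    rw [Multiset.map_map]
    apply congrArg
    apply Multiset.map_congr rfl
    intro q _
    simp [hf]
  have rhs_eq :
      LinearMap.lTensor (C →₀ K) (deltaF K d) (deltaF K d (Finsupp.single Γ (1 : K))) =
      (((d Γ).bind fun p => (d p.2).map fun q => (p.1, q.1, q.2)).map f).sum := by
    rw [deltaF_single, map_multiset_sum, Multiset.map_map, Multiset.map_bind,
      Multiset.sum_bind]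
    congr 1
    apply Multiset.map_congr rfl
    intro p _
    simp only [Function.comp_apply, LinearMap.lTensor_tmul, deltaF_single]
    rw [tmul_multiset_sum, Multiset.map_map]
    rw [Multiset.map_map]
    apply congrArg
    apply Multiset.map_congr rfl
    intro q _
    simp [hf]
  simp only [LinearMap.comp_apply, Finsupp.lsingle_apply]
  rw [lhs_eq, rhs_eq, hD2]
end

section
/- Let C be a type, d : C → Multiset (C × C) a decomposition rule satisfying condition (D3) with void element e, and K a commutative ring. Then the induced counit ε satisfies the counit laws: for every f : C →₀ K, applying ε to the left factor of Δ f followed by the canonical isomorphism K ⊗[K] (C →₀ K) ≃ C →₀ K returns f, and applying ε to the right factor of Δ f followed by the canonical isomorphism (C →₀ K) ⊗[K] K ≃ C →₀ K returns f. (Proposition 2, counit part.) -/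
open TensorProduct

/-- The induced counit on `C →₀ K`: the `K`-linear map sending `single Γ 1` to `1`
if `Γ = e` and to `0` otherwise. -/
noncomputable def epsF {C : Type*} (K : Type*) [CommRing K] [DecidableEq C]
    (e : C) : (C →₀ K) →ₗ[K] K :=
  Finsupp.lift K K C fun Γ => if Γ = e then 1 else 0

lemma aux_sum {α M : Type*} [AddCommMonoid M] [DecidableEq α] (s : Multiset α) (a : α)
    (h1 : s.count a = 1) (f : α → M) (h0 : ∀ p ∈ s, p ≠ a → f p = 0) :
    (s.map f).sum = f a := by
  rw [← Multiset.filter_add_not (· = a) s, Multiset.map_add, Multiset.sum_add]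
  rw [Multiset.filter_eq', h1]
  have h2 : ((Multiset.filter (fun x => ¬ x = a) s).map f).sum = 0 := by
    apply Multiset.sum_eq_zero
    intro x hx
    obtain ⟨y, hy, rfl⟩ := Multiset.mem_map.mp hx
    exact h0 y (Multiset.mem_filter.mp hy).1 (Multiset.mem_filter.mp hy).2
  rw [h2, add_zero]
  simp

lemma eps_single {C : Type*} (K : Type*) [CommRing K] [DecidableEq C] (e Γ : C) :
    epsF K e (Finsupp.single Γ (1 : K)) = if Γ = e then 1 else 0 := by
  rw [epsF, Finsupp.lift_apply, Finsupp.sum_single_index] <;> simp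

/-- Proposition 2 (counit part): under condition (D3) the induced counit satisfies
the counit laws. -/
theorem stmt3 {C : Type*} (K : Type*) [CommRing K] [DecidableEq C]
    (d : C → Multiset (C × C)) (e : C)
    (hD3a : d e = {(e, e)})
    (hD3b : ∀ Γ : C, Γ ≠ e → (d Γ).count (e, Γ) = 1)
    (hD3c : ∀ Γ : C, Γ ≠ e → (d Γ).count (Γ, e) = 1)
    (hD3d : ∀ Γ : C, Γ ≠ e → ∀ p ∈ d Γ,
      (p.1 = e → p = (e, Γ)) ∧ (p.2 = e → p = (Γ, e))) :
    ∀ f : C →₀ K,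
      (TensorProduct.lid K (C →₀ K))
          (LinearMap.rTensor (C →₀ K) (epsF K e) (deltaF K d f)) = f ∧
      (TensorProduct.rid K (C →₀ K))
          (LinearMap.lTensor (C →₀ K) (epsF K e) (deltaF K d f)) = f := by
  have hdelta : ∀ (Γ : C) (b : K), deltaF K d (Finsupp.single Γ b) =
      b • ((d Γ).map fun p =>
        Finsupp.single p.1 (1 : K) ⊗ₜ[K] Finsupp.single p.2 (1 : K)).sum := by
    intro Γ b
    simp [deltaF, Finsupp.sum_single_index]
  have key1 : ∀ Γ : C,
      ((d Γ).map (fun p => (if p.1 = e then (1:K) else 0) • Finsupp.single p.2 (1:K))).sum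
        = Finsupp.single Γ (1:K) := by
    intro Γ
    by_cases h : Γ = e
    · subst h; rw [hD3a]; simp
    · rw [aux_sum (d Γ) (e, Γ) (hD3b Γ h)]
      · simp
      · intro p hp hne
        have h1 : p.1 ≠ e := fun hh => hne ((hD3d Γ h p hp).1 hh)
        rw [if_neg h1, zero_smul]
  have key2 : ∀ Γ : C,
      ((d Γ).map (fun p => (if p.2 = e then (1:K) else 0) • Finsupp.single p.1 (1:K))).sum
        = Finsupp.single Γ (1:K) := by
    intro Γ
    by_cases h : Γ = e
    · subst h; rw [hD3a]; simp
    · rw [aux_sum (d Γ) (Γ, e) (hD3c Γ h)]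
      · simp
      · intro p hp hne
        have h1 : p.2 ≠ e := fun hh => hne ((hD3d Γ h p hp).2 hh)
        rw [if_neg h1, zero_smul]
  have L1 : (TensorProduct.lid K (C →₀ K)).toLinearMap ∘ₗ
      LinearMap.rTensor (C →₀ K) (epsF K e) ∘ₗ deltaF K d = LinearMap.id := by
    apply Finsupp.lhom_ext
    intro Γ b
    simp only [LinearMap.comp_apply, LinearMap.id_apply, LinearEquiv.coe_coe, hdelta,
      map_smul, map_multiset_sum, Multiset.map_map, Function.comp]
    rw [show (fun p : C × C => (TensorProduct.lid K (C →₀ K))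
        (LinearMap.rTensor (C →₀ K) (epsF K e)
          (Finsupp.single p.1 (1:K) ⊗ₜ[K] Finsupp.single p.2 (1:K)))) =
      (fun p : C × C => (if p.1 = e then (1:K) else 0) • Finsupp.single p.2 (1:K)) from ?_]
    · rw [key1 Γ, Finsupp.smul_single, smul_eq_mul, mul_one]
    · funext p
      rw [LinearMap.rTensor_tmul, TensorProduct.lid_tmul, eps_single]
  have L2 : (TensorProduct.rid K (C →₀ K)).toLinearMap ∘ₗ
      LinearMap.lTensor (C →₀ K) (epsF K e) ∘ₗ deltaF K d = LinearMap.id := by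
    apply Finsupp.lhom_ext
    intro Γ b
    simp only [LinearMap.comp_apply, LinearMap.id_apply, LinearEquiv.coe_coe, hdelta,
      map_smul, map_multiset_sum, Multiset.map_map, Function.comp]
    rw [show (fun p : C × C => (TensorProduct.rid K (C →₀ K))
        (LinearMap.lTensor (C →₀ K) (epsF K e)
          (Finsupp.single p.1 (1:K) ⊗ₜ[K] Finsupp.single p.2 (1:K)))) =
      (fun p : C × C => (if p.2 = e then (1:K) else 0) • Finsupp.single p.1 (1:K)) from ?_]
    · rw [key2 Γ, Finsupp.smul_single, smul_eq_mul, mul_one]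
    · funext p
      rw [LinearMap.lTensor_tmul, TensorProduct.rid_tmul, eps_single]
  intro f
  constructor
  · exact congrFun (congrArg DFunLike.coe L1) f
  · exact congrFun (congrArg DFunLike.coe L2) f
end

section
/- Let C be a type, d : C → Multiset (C × C) a decomposition rule satisfying condition (D4), and K a commutative ring. Then the induced comultiplication Δ on C →₀ K is cocommutative: composing Δ with the canonical flip isomorphism (C →₀ K) ⊗[K] (C →₀ K) ≃ (C →₀ K) ⊗[K] (C →₀ K) equals Δ. (Proposition 2, cocommutativity part.) -/
open TensorProduct

theorem TensorProduct.comm_multiset_sum_tmul {R M N ι κ : Type*} [CommSemiring R]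
    [AddCommMonoid M] [AddCommMonoid N] [Module R M] [Module R N] (f : ι → M) (g : κ → N)
    (s : Multiset (ι × κ)) :
    TensorProduct.comm R M N (s.map fun p => f p.1 ⊗ₜ[R] g p.2).sum =
      ((s.map Prod.swap).map fun p => g p.1 ⊗ₜ[R] f p.2).sum := by
  rw [map_multiset_sum, Multiset.map_map, Multiset.map_map]
  rfl

theorem deltaF_single_one {C : Type*} (K : Type*) [CommRing K] (d : C → Multiset (C × C))
    (Γ : C) :
    deltaF K d (Finsupp.single Γ 1) =
      ((d Γ).map fun p => Finsupp.single p.1 (1 : K) ⊗ₜ[K] Finsupp.single p.2 (1 : K)).sum := by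
  simp [deltaF]

/-- Proposition 2 (cocommutativity part): under condition (D4) the induced
comultiplication is cocommutative. -/
theorem stmt4 {C : Type*} (K : Type*) [CommRing K]
    (d : C → Multiset (C × C))
    (hD4 : ∀ Γ : C, (d Γ).map Prod.swap = d Γ) :
    (TensorProduct.comm K (C →₀ K) (C →₀ K)).toLinearMap ∘ₗ deltaF K d =
      deltaF K d := by
  refine Finsupp.lhom_ext' fun Γ => LinearMap.ext_ring ?_
  simp only [LinearMap.comp_apply, Finsupp.lsingle_apply, LinearEquiv.coe_coe, deltaF_single_one]
  rw [TensorProduct.comm_multiset_sum_tmul (fun c => Finsupp.single c (1 : K))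
    (fun c => Finsupp.single c (1 : K)), hD4]
end

section
/- Let C be a type, comp : C → C → Multiset C a composition rule satisfying (C3) with neutral element e, d : C → Multiset (C × C) a decomposition rule satisfying (D3) with the same element e as void object, and suppose (CD1) holds. Then for all Γ₂ Γ₁ : C, the neutral element e belongs to the multiset comp Γ₂ Γ₁ if and only if Γ₂ = e and Γ₁ = e. (Lemma used in the proof of Theorem 1: composition yields the neutral element only if both factors are void.) -/
/-- Lemma used in the proof of Theorem 1: under (C3), (D3) and (CD1),
composition yields the neutral element only if both factors are void. -/
theorem stmt6 {C : Type*} [DecidableEq C]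
    (comp : C → C → Multiset C)
    (e : C)
    (hC3l : ∀ Γ : C, comp e Γ = {Γ})
    (hC3r : ∀ Γ : C, comp Γ e = {Γ})
    (d : C → Multiset (C × C))
    (hD3a : d e = {(e, e)})
    (hD3b : ∀ Γ : C, Γ ≠ e → (d Γ).count (e, Γ) = 1)
    (hD3c : ∀ Γ : C, Γ ≠ e → (d Γ).count (Γ, e) = 1)
    (hD3d : ∀ Γ : C, Γ ≠ e → ∀ p ∈ d Γ,
      (p.1 = e → p = (e, Γ)) ∧ (p.2 = e → p = (Γ, e)))
    (hCD1 : ∀ Γ₂ Γ₁ : C,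
      (comp Γ₂ Γ₁).bind d =
        (d Γ₂).bind (fun p₂ => (d Γ₁).bind (fun p₁ =>
          (comp p₂.1 p₁.1).bind (fun a =>
            (comp p₂.2 p₁.2).map (fun b => (a, b)))))) :
    ∀ Γ₂ Γ₁ : C, e ∈ comp Γ₂ Γ₁ ↔ (Γ₂ = e ∧ Γ₁ = e) := by
  intro Γ₂ Γ₁
  constructor
  · intro hmem
    by_cases h2 : Γ₂ = e
    · subst h2
      rw [hC3l] at hmem
      simp only [Multiset.mem_singleton] at hmem
      exact ⟨rfl, hmem.symm⟩
    by_cases h1 : Γ₁ = e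
    · subst h1
      rw [hC3r] at hmem
      simp only [Multiset.mem_singleton] at hmem
      exact absurd hmem.symm h2
    exfalso
    set n := Multiset.count e (comp Γ₂ Γ₁) with hn_def
    have hn : 1 ≤ n := Multiset.one_le_count_iff_mem.mpr hmem
    -- count of (e,e) in d b
    have hde : ∀ b : C, Multiset.count ((e, e) : C × C) (d b) = if b = e then 1 else 0 := by
      intro b
      by_cases hb : b = e
      · subst hb; rw [hD3a]; simp
      · rw [if_neg hb, Multiset.count_eq_zero]
        intro hm
        have := ((hD3d b hb _ hm).1 rfl)
        have : e = b := congrArg Prod.snd this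
        exact hb this.symm
    -- LHS count: count (e,e) in (comp Γ₂ Γ₁).bind d = n
    have hA : ∀ m : Multiset C,
        ((m.map fun b => Multiset.count ((e, e) : C × C) (d b)).sum) = m.count e := by
      intro m
      induction m using Multiset.induction_on with
      | empty => simp
      | cons a s ih =>
        rw [Multiset.map_cons, Multiset.sum_cons, ih, Multiset.count_cons, hde]
        by_cases h : a = e
        · simp [h]; omega
        · rw [if_neg h, if_neg (fun he => h he.symm)]; omega
    have hLHS : Multiset.count ((e, e) : C × C) ((comp Γ₂ Γ₁).bind d) = n := by
      rw [Multiset.count_bind, hA]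
    -- inner pairing count
    have hB : ∀ (m : Multiset C) (K : ℕ),
        ((m.map fun a => if a = e then K else 0).sum) = m.count e * K := by
      intro m K
      induction m using Multiset.induction_on with
      | empty => simp
      | cons a s ih =>
        rw [Multiset.map_cons, Multiset.sum_cons, ih, Multiset.count_cons]
        by_cases h : a = e
        · rw [if_pos h, if_pos h.symm]; ring
        · rw [if_neg h, if_neg (fun he => h he.symm)]; ring
    have hpair : ∀ x y u v : C,
        Multiset.count ((e, e) : C × C)
            ((comp x y).bind fun a => (comp u v).map fun b => (a, b))
          = Multiset.count e (comp x y) * Multiset.count e (comp u v) := by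
      intro x y u v
      rw [Multiset.count_bind]
      have hinner : ∀ a : C,
          Multiset.count ((e, e) : C × C) ((comp u v).map fun b => (a, b))
            = if a = e then Multiset.count e (comp u v) else 0 := by
        intro a
        by_cases h : a = e
        · rw [if_pos h, h]
          exact Multiset.count_map_eq_count' (fun b => ((e, b) : C × C)) _
            (fun b1 b2 hb => by simpa using hb) e
        · rw [if_neg h, Multiset.count_eq_zero]
          intro hm
          obtain ⟨b, _, hb⟩ := Multiset.mem_map.mp hm
          exact h (congrArg Prod.fst hb)
      calc ((comp x y).map fun a =>
              Multiset.count ((e, e) : C × C) ((comp u v).map fun b => (a, b))).sum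
          = ((comp x y).map fun a =>
              if a = e then Multiset.count e (comp u v) else 0).sum := by
            congr 1; exact Multiset.map_congr rfl fun a _ => hinner a
        _ = Multiset.count e (comp x y) * Multiset.count e (comp u v) := hB _ _
    -- RHS count
    set F : C × C → ℕ := fun p₂ =>
      ((d Γ₁).map fun p₁ =>
        Multiset.count e (comp p₂.1 p₁.1) * Multiset.count e (comp p₂.2 p₁.2)).sum with hF_def
    have hRHS : Multiset.count ((e, e) : C × C)
        ((d Γ₂).bind fun p₂ => (d Γ₁).bind fun p₁ =>
          (comp p₂.1 p₁.1).bind fun a => (comp p₂.2 p₁.2).map fun b => (a, b))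
        = ((d Γ₂).map F).sum := by
      rw [Multiset.count_bind]
      congr 1
      apply Multiset.map_congr rfl
      intro p₂ _
      rw [Multiset.count_bind, hF_def]
      congr 1
      exact Multiset.map_congr rfl fun p₁ _ => hpair _ _ _ _
    -- membership facts
    have mem1 : ((e, Γ₂) : C × C) ∈ d Γ₂ :=
      Multiset.count_pos.mp (by rw [hD3b Γ₂ h2]; norm_num)
    obtain ⟨t, ht⟩ := Multiset.exists_cons_of_mem mem1
    have hne12 : ((Γ₂, e) : C × C) ≠ (e, Γ₂) := by
      intro h; exact h2 (congrArg Prod.fst h)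
    have mem2 : ((Γ₂, e) : C × C) ∈ t := by
      have := hD3c Γ₂ h2
      rw [ht, Multiset.count_cons, if_neg hne12] at this
      exact Multiset.count_pos.mp (by omega)
    obtain ⟨u, hu⟩ := Multiset.exists_cons_of_mem mem2
    have hd2 : d Γ₂ = (e, Γ₂) ::ₘ (Γ₂, e) ::ₘ u := by rw [ht, hu]
    have mem1' : ((e, Γ₁) : C × C) ∈ d Γ₁ :=
      Multiset.count_pos.mp (by rw [hD3b Γ₁ h1]; norm_num)
    have mem2' : ((Γ₁, e) : C × C) ∈ d Γ₁ :=
      Multiset.count_pos.mp (by rw [hD3c Γ₁ h1]; norm_num)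
    have hee : Multiset.count e (comp e e) = 1 := by rw [hC3l]; simp
    -- F (e, Γ₂) ≥ n
    have hF1 : n ≤ F (e, Γ₂) := by
      have hle : Multiset.count e (comp e e) * Multiset.count e (comp Γ₂ Γ₁)
          ≤ F (e, Γ₂) := by
        apply Multiset.single_le_sum (fun x _ => Nat.zero_le x)
        exact Multiset.mem_map_of_mem _ mem1'
      rw [hee, one_mul] at hle
      exact hle
    -- F (Γ₂, e) ≥ n
    have hF2 : n ≤ F (Γ₂, e) := by
      have hle : Multiset.count e (comp Γ₂ Γ₁) * Multiset.count e (comp e e)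
          ≤ F (Γ₂, e) := by
        apply Multiset.single_le_sum (fun x _ => Nat.zero_le x)
        exact Multiset.mem_map_of_mem _ mem2'
      rw [hee, mul_one] at hle
      exact hle
    have hbig : n + n ≤ ((d Γ₂).map F).sum := by
      rw [hd2, Multiset.map_cons, Multiset.map_cons, Multiset.sum_cons, Multiset.sum_cons]
      have := Nat.zero_le (Multiset.map F u).sum
      omega
    have hfinal : n = ((d Γ₂).map F).sum := by
      rw [← hRHS, ← hCD1 Γ₂ Γ₁, hLHS]
    omega
  · rintro ⟨rfl, rfl⟩
    rw [hC3l]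
    simp
end

section
/- Let C be a type, comp a composition rule satisfying (C2) and (C3) with neutral element e, d a decomposition rule satisfying (D2) and (D3) with the same element e as void object, assume (CD1), and assume condition (D5): for every Γ : C there is N such that for all n ≥ N every list in decs n Γ contains e. Let K be a commutative ring. Then there exists a K-linear map S : (C →₀ K) →ₗ[K] (C →₀ K) such that for every Γ : C, ((d Γ).map (fun p => mul (S (Finsupp.single p.1 1)) (Finsupp.single p.2 1))).sum = (if Γ = e then Finsupp.single e 1 else 0) and ((d Γ).map (fun p => mul (Finsupp.single p.1 1) (S (Finsupp.single p.2 1)))).sum = (if Γ = e then Finsupp.single e 1 else 0); i.e., S is an antipode making C →₀ K a Hopf algebra. (Proposition 3, Hopf Algebra.) -/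
/-- The multiset of decompositions of `Γ` into `n` ordered parts:
`decs 1 Γ = {[Γ]}` and
`decs (n+1) Γ = (d Γ).bind (fun p => (decs n p.1).map (fun l => l ++ [p.2]))`. -/
def decs {C : Type*} (d : C → Multiset (C × C)) : ℕ → C → Multiset (List C)
  | 0, Γ => {[Γ]}
  | 1, Γ => {[Γ]}
  | n + 2, Γ => (d Γ).bind fun p => (decs d (n + 1) p.1).map fun l => l ++ [p.2]

/-!
The antipode is the inverse of `ι : Γ ↦ Γ` in the convolution monoid of maps `C → C →₀ K`,
where `(f ⋆ g) Γ = ∑_{(a, b) ∈ d Γ} f a * g b` with unit `Γ ↦ ε(Γ) e`; this monoid is associative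
by (C2) and (D2) and unital by (C3) and (D3). By (D3), the equation `(L ⋆ f) Γ = ε(Γ) e` for a
map `f` with `f e = e` determines `L Γ` from the values of `L` at the left parts `a` of the
decompositions `(a, b)` of `Γ` with `a, b ≠ e`. This relation is well founded by (D5): a descending
chain of length `n` gives a decomposition of `Γ` into `n + 1` parts none of which is `e`. So every
such `f` has a left inverse. The left inverse `S` of `ι` satisfies `S e = e`, so `S` itself has a
left inverse, which must then equal `ι`; hence `S` is a two-sided inverse.
-/

section Multiplication

variable {C K : Type*} [CommRing K] {comp : C → C → Multiset C}

lemma mulF_single_one (a b : C) :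
    mulF K comp (Finsupp.single a 1) (Finsupp.single b 1) =
      ((comp a b).map fun Γ => Finsupp.single Γ (1 : K)).sum := by
  simp [mulF]

lemma mulF_sum_single_one_left (s : Multiset C) (c : C) :
    mulF K comp (s.map fun a => Finsupp.single a (1 : K)).sum (Finsupp.single c 1) =
      ((s.bind fun a => comp a c).map fun Γ => Finsupp.single Γ (1 : K)).sum := by
  induction s using Multiset.induction with
  | empty => simp
  | cons a s ih => simp [ih, mulF_single_one]

lemma mulF_sum_single_one_right (a : C) (s : Multiset C) :
    mulF K comp (Finsupp.single a 1) (s.map fun c => Finsupp.single c (1 : K)).sum =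
      ((s.bind fun c => comp a c).map fun Γ => Finsupp.single Γ (1 : K)).sum := by
  induction s using Multiset.induction with
  | empty => simp
  | cons c s ih => simp [ih, mulF_single_one]

lemma mulF_assoc
    (hC2 : ∀ Γ₃ Γ₂ Γ₁ : C,
      (comp Γ₂ Γ₁).bind (fun x => comp Γ₃ x) = (comp Γ₃ Γ₂).bind (fun x => comp x Γ₁))
    (x y z : C →₀ K) :
    mulF K comp (mulF K comp x y) z = mulF K comp x (mulF K comp y z) := by
  induction x using Finsupp.induction_linear with
  | zero => simp
  | add x x' hx hx' => simp only [map_add, LinearMap.add_apply, hx, hx']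
  | single a r =>
  induction y using Finsupp.induction_linear with
  | zero => simp
  | add y y' hy hy' => simp only [map_add, LinearMap.add_apply, hy, hy']
  | single b s =>
  induction z using Finsupp.induction_linear with
  | zero => simp
  | add z z' hz hz' => simp only [map_add, hz, hz']
  | single c t =>
  simp only [← Finsupp.smul_single_one _ r, ← Finsupp.smul_single_one _ s,
    ← Finsupp.smul_single_one _ t, map_smul, LinearMap.smul_apply, mulF_single_one,
    mulF_sum_single_one_left, mulF_sum_single_one_right, hC2]

variable {e : C}

lemma mulF_single_neutral_left (hl : ∀ Γ, comp e Γ = {Γ}) (x : C →₀ K) :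
    mulF K comp (Finsupp.single e 1) x = x := by
  have : mulF K comp (Finsupp.single e 1) = LinearMap.id :=
    Finsupp.basisSingleOne.ext fun Γ => by simp [mulF_single_one, hl]
  rw [this, LinearMap.id_apply]

lemma mulF_single_neutral_right (hr : ∀ Γ, comp Γ e = {Γ}) (x : C →₀ K) :
    mulF K comp x (Finsupp.single e 1) = x := by
  have : (mulF K comp).flip (Finsupp.single e 1) = LinearMap.id :=
    Finsupp.basisSingleOne.ext fun Γ => by simp [mulF_single_one, hr]
  rw [← LinearMap.flip_apply (mulF K comp), this, LinearMap.id_apply]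

end Multiplication

section Decomposition

variable {C : Type*} [DecidableEq C]

structure IsVoidObject (d : C → Multiset (C × C)) (e : C) : Prop where
  decomp_self : d e = {(e, e)}
  count_left : ∀ Γ : C, Γ ≠ e → (d Γ).count (e, Γ) = 1
  count_right : ∀ Γ : C, Γ ≠ e → (d Γ).count (Γ, e) = 1
  eq_of_mem : ∀ Γ : C, Γ ≠ e → ∀ p ∈ d Γ, (p.1 = e → p = (e, Γ)) ∧ (p.2 = e → p = (Γ, e))

def properDecomps (d : C → Multiset (C × C)) (e Γ : C) : Multiset (C × C) :=
  (d Γ).filter fun p => p.1 ≠ e ∧ p.2 ≠ e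

variable {d : C → Multiset (C × C)} {e : C}

lemma IsVoidObject.decomp_eq_cons (hd : IsVoidObject d e) {Γ : C} (hΓ : Γ ≠ e) :
    d Γ = (e, Γ) ::ₘ (Γ, e) ::ₘ properDecomps d e Γ := by
  ext q
  rw [Multiset.count_cons, Multiset.count_cons, properDecomps, Multiset.count_filter]
  by_cases hl : q = (e, Γ)
  · subst hl
    simp [hd.count_left Γ hΓ, hΓ, hΓ.symm]
  by_cases hr : q = (Γ, e)
  · subst hr
    simp [hd.count_right Γ hΓ, hΓ]
  by_cases hq : q.1 ≠ e ∧ q.2 ≠ e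
  · simp [hl, hr, hq]
  have : q ∉ d Γ := fun hmem => by
    rcases not_and_or.mp hq with h | h
    · exact hl ((hd.eq_of_mem Γ hΓ q hmem).1 (not_ne_iff.mp h))
    · exact hr ((hd.eq_of_mem Γ hΓ q hmem).2 (not_ne_iff.mp h))
  simp [hl, hr, hq, Multiset.count_eq_zero.mpr this]

lemma IsVoidObject.sum_map_of_fst_ne {M : Type*} [AddCommMonoid M] (hd : IsVoidObject d e)
    (g : C × C → M) (hg : ∀ p : C × C, p.1 ≠ e → g p = 0) (Γ : C) :
    ((d Γ).map g).sum = g (e, Γ) := by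
  by_cases hΓ : Γ = e
  · simp [hΓ, hd.decomp_self]
  rw [hd.decomp_eq_cons hΓ, Multiset.map_cons, Multiset.map_cons, Multiset.sum_cons,
    Multiset.sum_cons, hg (Γ, e) hΓ, Multiset.sum_eq_zero]
  · simp
  · simp only [properDecomps, Multiset.mem_map, Multiset.mem_filter]
    rintro _ ⟨p, ⟨-, hp, -⟩, rfl⟩
    exact hg p hp

lemma IsVoidObject.sum_map_of_snd_ne {M : Type*} [AddCommMonoid M] (hd : IsVoidObject d e)
    (g : C × C → M) (hg : ∀ p : C × C, p.2 ≠ e → g p = 0) (Γ : C) :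
    ((d Γ).map g).sum = g (Γ, e) := by
  by_cases hΓ : Γ = e
  · simp [hΓ, hd.decomp_self]
  rw [hd.decomp_eq_cons hΓ, Multiset.map_cons, Multiset.map_cons, Multiset.sum_cons,
    Multiset.sum_cons, hg (e, Γ) hΓ, Multiset.sum_eq_zero]
  · simp
  · simp only [properDecomps, Multiset.mem_map, Multiset.mem_filter]
    rintro _ ⟨p, ⟨-, -, hp⟩, rfl⟩
    exact hg p hp

end Decomposition

section Convolution

variable {C : Type*} (K : Type*) [CommRing K]

noncomputable def convMul (comp : C → C → Multiset C) (d : C → Multiset (C × C))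
    (f g : C → (C →₀ K)) : C → (C →₀ K) :=
  fun Γ => ((d Γ).map fun p => mulF K comp (f p.1) (g p.2)).sum

noncomputable def convOne [DecidableEq C] (e : C) : C → (C →₀ K) :=
  fun Γ => if Γ = e then Finsupp.single e 1 else 0

variable {K} {comp : C → C → Multiset C} {d : C → Multiset (C × C)}

lemma convMul_assoc
    (hC2 : ∀ Γ₃ Γ₂ Γ₁ : C,
      (comp Γ₂ Γ₁).bind (fun x => comp Γ₃ x) = (comp Γ₃ Γ₂).bind (fun x => comp x Γ₁))
    (hD2 : ∀ Γ : C,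
      (d Γ).bind (fun p => (d p.2).map (fun q => (p.1, q.1, q.2))) =
      (d Γ).bind (fun p => (d p.1).map (fun q => (q.1, q.2, p.2))))
    (f g h : C → (C →₀ K)) :
    convMul K comp d (convMul K comp d f g) h = convMul K comp d f (convMul K comp d g h) := by
  funext Γ
  have lhs : convMul K comp d (convMul K comp d f g) h Γ =
      (((d Γ).bind fun p => (d p.1).map fun q => (q.1, q.2, p.2)).map
        fun t => mulF K comp (f t.1) (mulF K comp (g t.2.1) (h t.2.2))).sum := by
    simp only [convMul, Multiset.map_bind, Multiset.sum_bind, Multiset.map_map,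
      Function.comp_def]
    refine congrArg _ (Multiset.map_congr rfl fun p _ => ?_)
    rw [← LinearMap.flip_apply (mulF K comp), map_multiset_sum, Multiset.map_map]
    exact congrArg _ (Multiset.map_congr rfl fun q _ => mulF_assoc hC2 (f q.1) (g q.2) (h p.2))
  have rhs : convMul K comp d f (convMul K comp d g h) Γ =
      (((d Γ).bind fun p => (d p.2).map fun q => (p.1, q.1, q.2)).map
        fun t => mulF K comp (f t.1) (mulF K comp (g t.2.1) (h t.2.2))).sum := by
    simp only [convMul, Multiset.map_bind, Multiset.sum_bind, Multiset.map_map,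
      Function.comp_def, map_multiset_sum]
  rw [lhs, rhs, hD2]

variable [DecidableEq C] {e : C}

lemma convOne_convMul (hl : ∀ Γ, comp e Γ = {Γ}) (hd : IsVoidObject d e)
    (f : C → (C →₀ K)) : convMul K comp d (convOne K e) f = f := by
  funext Γ
  rw [convMul, hd.sum_map_of_fst_ne _ (fun p hp => by simp [convOne, hp])]
  simp [convOne, mulF_single_neutral_left hl]

lemma convMul_convOne (hr : ∀ Γ, comp Γ e = {Γ}) (hd : IsVoidObject d e)
    (f : C → (C →₀ K)) : convMul K comp d f (convOne K e) = f := by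
  funext Γ
  rw [convMul, hd.sum_map_of_snd_ne _ (fun p hp => by simp [convOne, hp])]
  simp [convOne, mulF_single_neutral_right hr]

lemma convMul_left_inv_eq_right_inv
    (hC2 : ∀ Γ₃ Γ₂ Γ₁ : C,
      (comp Γ₂ Γ₁).bind (fun x => comp Γ₃ x) = (comp Γ₃ Γ₂).bind (fun x => comp x Γ₁))
    (hD2 : ∀ Γ : C,
      (d Γ).bind (fun p => (d p.2).map (fun q => (p.1, q.1, q.2))) =
      (d Γ).bind (fun p => (d p.1).map (fun q => (q.1, q.2, p.2))))
    (hl : ∀ Γ, comp e Γ = {Γ}) (hr : ∀ Γ, comp Γ e = {Γ}) (hd : IsVoidObject d e)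
    {f g h : C → (C →₀ K)} (hhg : convMul K comp d h g = convOne K e)
    (hgf : convMul K comp d g f = convOne K e) : h = f :=
  calc h = convMul K comp d h (convMul K comp d g f) := by rw [hgf, convMul_convOne hr hd]
    _ = convMul K comp d (convMul K comp d h g) f := (convMul_assoc hC2 hD2 h g f).symm
    _ = f := by rw [hhg, convOne_convMul hl hd]

end Convolution

section ProperLeftFactor

variable {C : Type*} [DecidableEq C] {d : C → Multiset (C × C)} {e : C}

variable (d e) in
def IsProperLeftFactor (a Γ : C) : Prop :=
  ∃ p ∈ properDecomps d e Γ, p.1 = a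

lemma acc_isProperLeftFactor_of_decs (he : d e = {(e, e)}) (n : ℕ) :
    ∀ Γ : C, (∀ m ≥ n, ∀ l ∈ decs d (m + 1) Γ, e ∈ l) → Acc (IsProperLeftFactor d e) Γ := by
  induction n with
  | zero =>
    intro Γ h
    have hΓ : Γ = e := (List.mem_singleton.mp (h 0 le_rfl [Γ] (by simp [decs]))).symm
    refine ⟨_, fun a ⟨p, hp, _⟩ => ?_⟩
    rw [properDecomps, hΓ, he, Multiset.mem_filter, Multiset.mem_singleton] at hp
    exact absurd (congrArg Prod.fst hp.1) hp.2.1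
  | succ n ih =>
    refine fun Γ h => ⟨_, fun a ⟨p, hp, hpa⟩ => ih a fun m hm l hl => ?_⟩
    obtain ⟨hpΓ, -, hp2⟩ := Multiset.mem_filter.mp hp
    have hstep : l ++ [p.2] ∈ decs d (m + 2) Γ :=
      Multiset.mem_bind.mpr ⟨p, hpΓ, Multiset.mem_map.mpr ⟨l, hpa ▸ hl, rfl⟩⟩
    rcases List.mem_append.mp (h (m + 1) (by omega) _ hstep) with hl | hl
    · exact hl
    · exact absurd (List.mem_singleton.mp hl).symm hp2

lemma wellFounded_isProperLeftFactor (he : d e = {(e, e)})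
    (hD5 : ∀ Γ : C, ∃ N : ℕ, ∀ n ≥ N, ∀ l ∈ decs d n Γ, e ∈ l) :
    WellFounded (IsProperLeftFactor d e) := by
  refine ⟨fun Γ => ?_⟩
  obtain ⟨N, hN⟩ := hD5 Γ
  exact acc_isProperLeftFactor_of_decs he N Γ fun m hm l hl => hN (m + 1) (by omega) l hl

end ProperLeftFactor

section LeftInverse

variable {C : Type*} (K : Type*) [CommRing K] [DecidableEq C]
  (comp : C → C → Multiset C) {d : C → Multiset (C × C)} {e : C}

noncomputable def convLeftInv (hwf : WellFounded (IsProperLeftFactor d e))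
    (f : C → (C →₀ K)) : C → (C →₀ K) :=
  hwf.fix fun Γ rec =>
    if Γ = e then Finsupp.single e 1
    else -f Γ - ((properDecomps d e Γ).attach.map fun p =>
      mulF K comp (rec p.1.1 ⟨p.1, p.2, rfl⟩) (f p.1.2)).sum

variable {K comp}

lemma convLeftInv_eq (hwf : WellFounded (IsProperLeftFactor d e)) (f : C → (C →₀ K)) (Γ : C) :
    convLeftInv K comp hwf f Γ =
      if Γ = e then Finsupp.single e 1
      else -f Γ - ((properDecomps d e Γ).map fun p =>
        mulF K comp (convLeftInv K comp hwf f p.1) (f p.2)).sum := by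
  rw [convLeftInv, WellFounded.fix_eq]
  split_ifs
  · rfl
  · conv_rhs => rw [← Multiset.attach_map_val (properDecomps d e Γ), Multiset.map_map]
    rfl

lemma convLeftInv_self (hwf : WellFounded (IsProperLeftFactor d e)) (f : C → (C →₀ K)) :
    convLeftInv K comp hwf f e = Finsupp.single e 1 := by
  rw [convLeftInv_eq, if_pos rfl]

lemma convLeftInv_convMul (hl : ∀ Γ, comp e Γ = {Γ}) (hr : ∀ Γ, comp Γ e = {Γ})
    (hd : IsVoidObject d e) (hwf : WellFounded (IsProperLeftFactor d e))
    (f : C → (C →₀ K)) (hf : f e = Finsupp.single e 1) :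
    convMul K comp d (convLeftInv K comp hwf f) f = convOne K e := by
  funext Γ
  by_cases hΓ : Γ = e
  · subst hΓ
    simp [convMul, convOne, hd.decomp_self, convLeftInv_self, hf, mulF_single_neutral_left hl]
  rw [convMul, hd.decomp_eq_cons hΓ]
  simp only [Multiset.map_cons, Multiset.sum_cons, convLeftInv_self, hf,
    mulF_single_neutral_left hl, mulF_single_neutral_right hr]
  rw [convLeftInv_eq hwf f Γ, if_neg hΓ, convOne, if_neg hΓ]
  abel

end LeftInverse

theorem stmt8_general {C : Type*} (K : Type*) [CommRing K] [DecidableEq C]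
    (comp : C → C → Multiset C)
    (hC2 : ∀ Γ₃ Γ₂ Γ₁ : C,
      (comp Γ₂ Γ₁).bind (fun x => comp Γ₃ x) = (comp Γ₃ Γ₂).bind (fun x => comp x Γ₁))
    (e : C)
    (hC3l : ∀ Γ : C, comp e Γ = {Γ})
    (hC3r : ∀ Γ : C, comp Γ e = {Γ})
    (d : C → Multiset (C × C))
    (hD2 : ∀ Γ : C,
      (d Γ).bind (fun p => (d p.2).map (fun q => (p.1, q.1, q.2))) =
      (d Γ).bind (fun p => (d p.1).map (fun q => (q.1, q.2, p.2))))
    (hD3a : d e = {(e, e)})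
    (hD3b : ∀ Γ : C, Γ ≠ e → (d Γ).count (e, Γ) = 1)
    (hD3c : ∀ Γ : C, Γ ≠ e → (d Γ).count (Γ, e) = 1)
    (hD3d : ∀ Γ : C, Γ ≠ e → ∀ p ∈ d Γ,
      (p.1 = e → p = (e, Γ)) ∧ (p.2 = e → p = (Γ, e)))
    (hD5 : ∀ Γ : C, ∃ N : ℕ, ∀ n ≥ N, ∀ l ∈ decs d n Γ, e ∈ l) :
    ∃ S : (C →₀ K) →ₗ[K] (C →₀ K),
      ∀ Γ : C,
        ((d Γ).map fun p =>
            mulF K comp (S (Finsupp.single p.1 1)) (Finsupp.single p.2 1)).sum =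
          (if Γ = e then Finsupp.single e (1 : K) else 0) ∧
        ((d Γ).map fun p =>
            mulF K comp (Finsupp.single p.1 1) (S (Finsupp.single p.2 1))).sum =
          (if Γ = e then Finsupp.single e (1 : K) else 0) := by
  have hd : IsVoidObject d e := ⟨hD3a, hD3b, hD3c, hD3d⟩
  have hwf := wellFounded_isProperLeftFactor hD3a hD5
  let ι : C → (C →₀ K) := fun Γ => Finsupp.single Γ 1
  let S := convLeftInv K comp hwf ι
  have hSι : convMul K comp d S ι = convOne K e :=
    convLeftInv_convMul hC3l hC3r hd hwf ι rfl
  have hιS : convMul K comp d ι S = convOne K e := by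
    have hUS := convLeftInv_convMul hC3l hC3r hd hwf S (convLeftInv_self hwf ι)
    rwa [convMul_left_inv_eq_right_inv hC2 hD2 hC3l hC3r hd hUS hSι] at hUS
  refine ⟨Finsupp.linearCombination K S, fun Γ => ⟨?_, ?_⟩⟩ <;>
    simp only [Finsupp.linearCombination_single, one_smul]
  · exact congrFun hSι Γ
  · exact congrFun hιS Γ

/-- Proposition 3 (Hopf Algebra): under (C2), (C3), (D2), (D3), (CD1) and (D5)
there exists an antipode `S` on `C →₀ K`. -/
theorem stmt8 {C : Type*} (K : Type*) [CommRing K] [DecidableEq C]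
    (comp : C → C → Multiset C)
    (hC2 : ∀ Γ₃ Γ₂ Γ₁ : C,
      (comp Γ₂ Γ₁).bind (fun x => comp Γ₃ x) = (comp Γ₃ Γ₂).bind (fun x => comp x Γ₁))
    (e : C)
    (hC3l : ∀ Γ : C, comp e Γ = {Γ})
    (hC3r : ∀ Γ : C, comp Γ e = {Γ})
    (d : C → Multiset (C × C))
    (hD2 : ∀ Γ : C,
      (d Γ).bind (fun p => (d p.2).map (fun q => (p.1, q.1, q.2))) =
      (d Γ).bind (fun p => (d p.1).map (fun q => (q.1, q.2, p.2))))
    (hD3a : d e = {(e, e)})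
    (hD3b : ∀ Γ : C, Γ ≠ e → (d Γ).count (e, Γ) = 1)
    (hD3c : ∀ Γ : C, Γ ≠ e → (d Γ).count (Γ, e) = 1)
    (hD3d : ∀ Γ : C, Γ ≠ e → ∀ p ∈ d Γ,
      (p.1 = e → p = (e, Γ)) ∧ (p.2 = e → p = (Γ, e)))
    (hCD1 : ∀ Γ₂ Γ₁ : C,
      (comp Γ₂ Γ₁).bind d =
        (d Γ₂).bind (fun p₂ => (d Γ₁).bind (fun p₁ =>
          (comp p₂.1 p₁.1).bind (fun a =>
            (comp p₂.2 p₁.2).map (fun b => (a, b))))))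
    (hD5 : ∀ Γ : C, ∃ N : ℕ, ∀ n ≥ N, ∀ l ∈ decs d n Γ, e ∈ l) :
    ∃ S : (C →₀ K) →ₗ[K] (C →₀ K),
      ∀ Γ : C,
        ((d Γ).map fun p =>
            mulF K comp (S (Finsupp.single p.1 1)) (Finsupp.single p.2 1)).sum =
          (if Γ = e then Finsupp.single e (1 : K) else 0) ∧
        ((d Γ).map fun p =>
            mulF K comp (Finsupp.single p.1 1) (S (Finsupp.single p.2 1))).sum =
          (if Γ = e then Finsupp.single e (1 : K) else 0) :=
  stmt8_general K comp hC2 e hC3l hC3r d hD2 hD3a hD3b hD3c hD3d hD5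
end

section
/- Let C be a type, comp a composition rule satisfying (C3) with neutral element e, d a decomposition rule satisfying (D3) with the same element e as void object, and K a commutative ring. Suppose S : (C →₀ K) →ₗ[K] (C →₀ K) is a K-linear map satisfying S (Finsupp.single e 1) = Finsupp.single e 1 and, for every Γ ≠ e, the recursion S (Finsupp.single Γ 1) = -(((d Γ).filter (fun p => p.2 ≠ e)).map (fun p => mul (S (Finsupp.single p.1 1)) (Finsupp.single p.2 1))).sum. Then S satisfies the left antipode identity: for every Γ : C, ((d Γ).map (fun p => mul (S (Finsupp.single p.1 1)) (Finsupp.single p.2 1))).sum = (if Γ = e then Finsupp.single e 1 else 0). (Remark after Proposition 3: the antipode admits construction by iteration.) -/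
lemma mulF_single_single {C : Type*} (K : Type*) [CommRing K]
    (comp : C → C → Multiset C) (a b : C) :
    mulF K comp (Finsupp.single a (1 : K)) (Finsupp.single b 1) =
      ((comp a b).map fun Γ => Finsupp.single Γ (1 : K)).sum := by
  simp [mulF, Finsupp.lift_apply, Finsupp.sum_single_index]

lemma mulF_right_e {C : Type*} (K : Type*) [CommRing K]
    (comp : C → C → Multiset C) (e : C) (hC3r : ∀ Γ : C, comp Γ e = {Γ})
    (x : C →₀ K) :
    mulF K comp x (Finsupp.single e 1) = x := by
  have : (LinearMap.flip (mulF K comp)) (Finsupp.single e 1) = LinearMap.id := by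
    apply Finsupp.lhom_ext
    intro a b
    have hb : (Finsupp.single a b : C →₀ K) = b • Finsupp.single a 1 := by
      simp [Finsupp.smul_single]
    rw [hb, map_smul, map_smul]
    simp only [LinearMap.flip_apply, LinearMap.id_coe, id_eq]
    rw [mulF_single_single, hC3r]
    simp
  calc mulF K comp x (Finsupp.single e 1)
      = (LinearMap.flip (mulF K comp)) (Finsupp.single e 1) x := rfl
    _ = x := by rw [this]; rfl

/-- Remark after Proposition 3: a linear map satisfying the iterative recursion
`S (single Γ 1) = -(sum over nontrivial decompositions of S(Γ'') * Γ')`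
satisfies the left antipode identity. -/
theorem stmt9 {C : Type*} (K : Type*) [CommRing K] [DecidableEq C]
    (comp : C → C → Multiset C)
    (e : C)
    (hC3l : ∀ Γ : C, comp e Γ = {Γ})
    (hC3r : ∀ Γ : C, comp Γ e = {Γ})
    (d : C → Multiset (C × C))
    (hD3a : d e = {(e, e)})
    (hD3b : ∀ Γ : C, Γ ≠ e → (d Γ).count (e, Γ) = 1)
    (hD3c : ∀ Γ : C, Γ ≠ e → (d Γ).count (Γ, e) = 1)
    (hD3d : ∀ Γ : C, Γ ≠ e → ∀ p ∈ d Γ,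
      (p.1 = e → p = (e, Γ)) ∧ (p.2 = e → p = (Γ, e)))
    (S : (C →₀ K) →ₗ[K] (C →₀ K))
    (hSe : S (Finsupp.single e 1) = Finsupp.single e 1)
    (hSrec : ∀ Γ : C, Γ ≠ e →
      S (Finsupp.single Γ 1) =
        -(((d Γ).filter (fun p => p.2 ≠ e)).map fun p =>
            mulF K comp (S (Finsupp.single p.1 1)) (Finsupp.single p.2 1)).sum) :
    ∀ Γ : C,
      ((d Γ).map fun p =>
          mulF K comp (S (Finsupp.single p.1 1)) (Finsupp.single p.2 1)).sum =
        (if Γ = e then Finsupp.single e (1 : K) else 0) := by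
  intro Γ
  by_cases hΓ : Γ = e
  · subst hΓ
    rw [hD3a]
    simp only [Multiset.map_singleton, Multiset.sum_singleton, if_pos rfl]
    rw [hSe, mulF_single_single, hC3l]
    simp
  · rw [if_neg hΓ]
    -- split d Γ according to whether the second component is e
    have hsplit : (d Γ).filter (fun p => p.2 = e) +
        (d Γ).filter (fun p => p.2 ≠ e) = d Γ := by
      have := Multiset.filter_add_not (fun p : C × C => p.2 = e) (d Γ)
      simpa using this
    have hfe : (d Γ).filter (fun p => p.2 = e) = {(Γ, e)} := by
      ext q
      by_cases hq : q = (Γ, e)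
      · subst hq
        rw [Multiset.count_filter]
        simp [hD3c Γ hΓ]
      · rw [Multiset.count_filter]
        by_cases hq2 : q.2 = e
        · rw [if_pos hq2]
          have : q ∉ d Γ := by
            intro hmem
            exact hq ((hD3d Γ hΓ q hmem).2 hq2)
          rw [Multiset.count_eq_zero_of_notMem this]
          simp [Ne.symm, hq]
        · rw [if_neg hq2]
          have : (Γ, e) ≠ q := fun h => hq h.symm
          simp [Multiset.count_singleton, if_neg (fun h : q = (Γ,e) => hq h)]
    calc ((d Γ).map fun p =>
            mulF K comp (S (Finsupp.single p.1 1)) (Finsupp.single p.2 1)).sum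
        = (((d Γ).filter (fun p => p.2 = e) +
            (d Γ).filter (fun p => p.2 ≠ e)).map fun p =>
            mulF K comp (S (Finsupp.single p.1 1)) (Finsupp.single p.2 1)).sum := by
          rw [hsplit]
      _ = 0 := by
          rw [Multiset.map_add, Multiset.sum_add, hfe]
          simp only [Multiset.map_singleton, Multiset.sum_singleton]
          rw [mulF_right_e K comp e hC3r, hSrec Γ hΓ]
          exact neg_add_cancel _
end

section
/- Let C be a type, d : C → Multiset (C × C) a decomposition rule, e : C, and sz : C → ℕ a size function such that (i) for every Γ and every (Γ'', Γ') ∈ d Γ one has sz Γ'' + sz Γ' = sz Γ, and (ii) sz Γ = 0 ↔ Γ = e. Then condition (D5) holds; more precisely, for every Γ : C and every n > sz Γ, every list in decs n Γ contains e. (Key step in the proof of Proposition 4: size-compatibility (CD2) implies finiteness of nontrivial multiple decompositions (D5).) -/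
/-- Key step in the proof of Proposition 4: size-compatibility (CD2) for the
decomposition rule implies condition (D5); more precisely, for `n > sz Γ` every
`n`-fold decomposition of `Γ` contains the void element `e`. -/
theorem stmt10 {C : Type*}
    (d : C → Multiset (C × C)) (e : C) (sz : C → ℕ)
    (hsz : ∀ Γ : C, ∀ p ∈ d Γ, sz p.1 + sz p.2 = sz Γ)
    (hze : ∀ Γ : C, sz Γ = 0 ↔ Γ = e) :
    (∀ Γ : C, ∃ N : ℕ, ∀ n ≥ N, ∀ l ∈ decs d n Γ, e ∈ l) ∧
    (∀ Γ : C, ∀ n : ℕ, n > sz Γ → ∀ l ∈ decs d n Γ, e ∈ l) := by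
  have key : ∀ n : ℕ, ∀ Γ : C, n > sz Γ → ∀ l ∈ decs d n Γ, e ∈ l := by
    intro n
    induction n with
    | zero => intro Γ h; omega
    | succ m ih =>
      intro Γ h l hl
      match m with
      | 0 =>
        have : sz Γ = 0 := by omega
        have : Γ = e := (hze Γ).mp this
        simp [decs] at hl
        subst hl this
        simp
      | k + 1 =>
        simp only [decs, Multiset.mem_bind, Multiset.mem_map] at hl
        obtain ⟨p, hp, l', hl', rfl⟩ := hl
        have hs := hsz Γ p hp
        by_cases h2 : sz p.2 = 0
        · have : p.2 = e := (hze p.2).mp h2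
          simp [this]
        · have : k + 1 > sz p.1 := by omega
          have := ih p.1 this l' hl'
          simp [this]
  exact ⟨fun Γ => ⟨sz Γ + 1, fun n hn => key n Γ (by omega)⟩, fun Γ n => key n Γ⟩
end

section
/- Let A be a type. For all lists l₁ l₂ : List A, the subword decomposition of the concatenation satisfies split (l₁ ++ l₂) = (split l₁).bind (fun p₁ => (split l₂).map (fun p₂ => (p₁.1 ++ p₂.1, p₁.2 ++ p₂.2))), an equality of multisets (multiplicities included). (Compatibility condition (CD1) for the free algebra of words, Section 5.1.1.) -/
/-- The multiset of all ordered pairs consisting of a subword (subsequence) of `l`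
and its complementary subword, counted according to the choice of positions. -/
def split {A : Type*} : List A → Multiset (List A × List A)
  | [] => {([], [])}
  | a :: l =>
      ((split l).map fun p => (a :: p.1, p.2)) +
      ((split l).map fun p => (p.1, a :: p.2))

/-- Compatibility condition (CD1) for the free algebra of words (Section 5.1.1):
the subword decomposition of a concatenation is the componentwise concatenation of
the subword decompositions. -/
theorem stmt13 {A : Type*} (l₁ l₂ : List A) :
    split (l₁ ++ l₂) =
      (split l₁).bind fun p₁ =>
        (split l₂).map fun p₂ => (p₁.1 ++ p₂.1, p₁.2 ++ p₂.2) := by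
  induction l₁ with
  | nil => simp [split, Multiset.bind]
  | cons a l ih =>
      rw [List.cons_append, split, ih, split, Multiset.add_bind, Multiset.bind_map, Multiset.bind_map,
        Multiset.map_bind, Multiset.map_bind]
      simp [Multiset.map_map, Function.comp]
end

section
/- Let A be a type. For every list l : List A, the subword decomposition is coassociative: (split l).bind (fun p => (split p.2).map (fun q => (p.1, q.1, q.2))) = (split l).bind (fun p => (split p.1).map (fun q => (q.1, q.2, p.2))), an equality of multisets of triples (multiplicities included). (Condition (D2) for the free algebra of words, Section 5.1.1.) -/
/-- Condition (D2) for the free algebra of words (Section 5.1.1): the subword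
decomposition is coassociative. -/
theorem stmt14 {A : Type*} (l : List A) :
    (split l).bind (fun p => (split p.2).map fun q => (p.1, q.1, q.2)) =
      (split l).bind (fun p => (split p.1).map fun q => (q.1, q.2, p.2)) := by
  induction l with
  | nil => rfl
  | cons a l ih =>
    simp only [split, Multiset.add_bind, Multiset.bind_map, Multiset.map_bind,
      Multiset.map_map, Function.comp, Multiset.map_add]
    have h1 := congrArg (Multiset.map (fun t : List A × List A × List A => (a::t.1, t.2.1, t.2.2))) ih
    have h2 := congrArg (Multiset.map (fun t : List A × List A × List A => (t.1, a::t.2.1, t.2.2))) ih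
    have h3 := congrArg (Multiset.map (fun t : List A × List A × List A => (t.1, t.2.1, a::t.2.2))) ih
    simp only [Multiset.map_bind, Multiset.map_map, Function.comp] at h1 h2 h3
    simp only [Multiset.bind_add]
    rw [h1, h2, h3]
    abel
end

section
/- Let A be a type. For every list l : List A, the subword decomposition is symmetric: (split l).map Prod.swap = split l, an equality of multisets (multiplicities included). (Condition (D4) for the free algebra of words, which makes the free algebra's coproduct cocommutative, Section 5.1.1.) -/
/-- Condition (D4) for the free algebra of words (Section 5.1.1): the subword
decomposition is symmetric, hence the coproduct is cocommutative. -/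
theorem stmt15 {A : Type*} (l : List A) :
    (split l).map Prod.swap = split l := by
  induction l with
  | nil => rfl
  | cons a l ih =>
    simp only [split, Multiset.map_add, Multiset.map_map, Function.comp]
    rw [add_comm]
    congr 1
    · calc (Multiset.map (fun p : List A × List A => (a :: p.2, p.1)) (split l))
          = (Multiset.map (fun p : List A × List A => (a :: p.1, p.2))
              ((split l).map Prod.swap)) := by
            rw [Multiset.map_map]; rfl
        _ = _ := by rw [ih]
    · calc (Multiset.map (fun p : List A × List A => (p.2, a :: p.1)) (split l))
          = (Multiset.map (fun p : List A × List A => (p.1, a :: p.2))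
              ((split l).map Prod.swap)) := by
            rw [Multiset.map_map]; rfl
        _ = _ := by rw [ih]
end

section
/- Let A be a type and K a commutative ring. For every nonempty list l : List A, the following identity holds in the free K-module List A →₀ K: ((split l).map (fun p => ((-1 : K) ^ p.1.length) • Finsupp.single (p.1.reverse ++ p.2) (1 : K))).sum = 0. (Antipode identity μ ∘ (S ⊗ Id) ∘ Δ = η ∘ ε for the free algebra of words, where S sends a word w of length k to (-1)^k times its reversal, Eq. (Free4) of Section 5.1.1.) -/
/-- Antipode identity `μ ∘ (S ⊗ Id) ∘ Δ = η ∘ ε` for the free algebra of words on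
a nonempty word, where `S` sends a word `w` of length `k` to `(-1)^k` times its
reversal (Eq. (Free4) of Section 5.1.1). -/
theorem stmt16 {A : Type*} (K : Type*) [CommRing K] (l : List A) (hl : l ≠ []) :
    ((split l).map fun p =>
        ((-1 : K) ^ p.1.length) •
          Finsupp.single (p.1.reverse ++ p.2) (1 : K)).sum = (0 : List A →₀ K) := by
  cases l with
  | nil => exact absurd rfl hl
  | cons a t =>
    rw [split, Multiset.map_add, Multiset.sum_add, Multiset.map_map, Multiset.map_map,
      ← Multiset.sum_map_add]
    rw [Multiset.map_congr rfl (fun p _ => ?_), Multiset.sum_map_zero]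
    show (((-1 : K) ^ (a :: p.1).length) •
        Finsupp.single ((a :: p.1).reverse ++ p.2) (1 : K)) +
      (((-1 : K) ^ p.1.length) •
        Finsupp.single (p.1.reverse ++ (a :: p.2)) (1 : K)) = 0
    simp [pow_succ, List.append_assoc, mul_comm, neg_smul]
end

section
/- Let A be a type. For all lists u v : List A, the multiset of shuffles is symmetric: shuffles u v = shuffles v u, an equality of multisets (multiplicities included). (Condition (C4) for the shuffle algebra: the shuffle product is commutative, Section 5.1.3.) -/
/-- The multiset of all interleavings (shuffles) of two words, preserving the
relative order of the letters of each, counted according to the choice of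
positions. -/
def shuffles {A : Type*} : List A → List A → Multiset (List A)
  | [], l => {l}
  | a :: l, [] => {a :: l}
  | a :: l, b :: m =>
      ((shuffles l (b :: m)).map fun w => a :: w) +
      ((shuffles (a :: l) m).map fun w => b :: w)
termination_by u v => u.length + v.length

/-- Condition (C4) for the shuffle algebra (Section 5.1.3): the multiset of
shuffles is symmetric, so the shuffle product is commutative. -/
theorem stmt17 {A : Type*} (u v : List A) :
    shuffles u v = shuffles v u := by
  induction u, v using shuffles.induct with
  | case1 l =>
    cases l with
    | nil => rfl
    | cons b m => rw [shuffles, shuffles]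
  | case2 a l => rw [shuffles, shuffles]
  | case3 a l b m ih1 ih2 =>
    rw [shuffles, shuffles, ih1, ih2, add_comm]
end

section
/- Let A be a type. For all lists u v w : List A, the shuffle composition is associative in the multiset sense: (shuffles v w).bind (fun x => shuffles u x) = (shuffles u v).bind (fun x => shuffles x w), an equality of multisets (multiplicities included). (Condition (C2) for the shuffle algebra, Section 5.1.3.) -/
@[simp] lemma shuffles_nil_left {A : Type*} (l : List A) : shuffles [] l = {l} := by
  rw [shuffles]

@[simp] lemma shuffles_nil_right {A : Type*} (l : List A) : shuffles l [] = {l} := by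
  cases l <;> rw [shuffles]

lemma shuffles_cons_cons {A : Type*} (a b : A) (l m : List A) :
    shuffles (a :: l) (b :: m) =
      ((shuffles l (b :: m)).map fun w => a :: w) +
      ((shuffles (a :: l) m).map fun w => b :: w) := by
  rw [shuffles]

lemma bind_id {A : Type*} (s : Multiset A) : (s.bind fun x => ({x} : Multiset A)) = s := by
  simpa using Multiset.bind_singleton (s := s) id

/-- Condition (C2) for the shuffle algebra (Section 5.1.3): the shuffle
composition is associative in the multiset sense. -/
theorem stmt18 {A : Type*} (u v w : List A) :
    (shuffles v w).bind (fun x => shuffles u x) =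
      (shuffles u v).bind (fun x => shuffles x w) := by
  match u, v, w with
  | [], v, w => simp [Multiset.singleton_bind, bind_id]
  | u, [], w => simp [Multiset.singleton_bind]
  | u, v, [] => simp [Multiset.singleton_bind, bind_id]
  | a :: u, b :: v, c :: w =>
    have h1 := stmt18 u (b :: v) (c :: w)
    have h2 := stmt18 (a :: u) v (c :: w)
    have h3 := stmt18 (a :: u) (b :: v) w
    calc (shuffles (b::v) (c::w)).bind (fun x => shuffles (a::u) x)
        = ((shuffles v (c::w)).bind fun x => shuffles (a::u) (b::x)) +
          ((shuffles (b::v) w).bind fun x => shuffles (a::u) (c::x)) := by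
          rw [shuffles_cons_cons, Multiset.add_bind, Multiset.bind_map, Multiset.bind_map]
      _ = (((shuffles v (c::w)).bind fun x => shuffles u (b::x)).map fun y => a :: y) +
          (((shuffles v (c::w)).bind fun x => shuffles (a::u) x).map fun y => b :: y) +
          ((((shuffles (b::v) w).bind fun x => shuffles u (c::x)).map fun y => a :: y) +
          (((shuffles (b::v) w).bind fun x => shuffles (a::u) x).map fun y => c :: y)) := by
          simp only [shuffles_cons_cons, Multiset.bind_add, Multiset.map_bind]
      _ = (((shuffles (b::v) (c::w)).bind fun x => shuffles u x).map fun y => a :: y) +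
          ((((shuffles v (c::w)).bind fun x => shuffles (a::u) x).map fun y => b :: y) +
          (((shuffles (b::v) w).bind fun x => shuffles (a::u) x).map fun y => c :: y)) := by
          rw [shuffles_cons_cons, Multiset.add_bind, Multiset.bind_map, Multiset.bind_map,
            Multiset.map_add]
          abel
      _ = (((shuffles u (b::v)).bind fun x => shuffles x (c::w)).map fun y => a :: y) +
          ((((shuffles (a::u) v).bind fun x => shuffles x (c::w)).map fun y => b :: y) +
          (((shuffles (a::u) (b::v)).bind fun x => shuffles x w).map fun y => c :: y)) := by
          rw [h1, h2, h3]
      _ = ((shuffles u (b::v)).bind fun x => shuffles (a::x) (c::w)) +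
          ((shuffles (a::u) v).bind fun x => shuffles (b::x) (c::w)) := by
          simp only [shuffles_cons_cons, Multiset.bind_add, Multiset.map_bind, Multiset.map_add,
            Multiset.add_bind, Multiset.bind_map]
          abel
      _ = (shuffles (a::u) (b::v)).bind fun x => shuffles x (c::w) := by
          rw [shuffles_cons_cons, Multiset.add_bind, Multiset.bind_map, Multiset.bind_map]
termination_by u.length + v.length + w.length
end
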